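/- Let k be a field and a ∈ ℝ. The interval persistence module k(a,∞) over (ℝ,≤) is not a projective object in the category of persistence modules (equivalently, not a graded projective k[U₀]-module), although it is a flat object (filtered colimit of the projectives k[b,∞) for b > a). -/

import Mathlib

open CategoryTheory

noncomputable section
attribute [local instance] Classical.propDecidable
set_option linter.unusedSectionVars false

variable (R : Type) [Ring R] {P : Type} [Preorder P]

/-- Condition that a subset is order-convex. -/
def IsConvexSet (I : Set P) : Prop := ∀ ⦃x y z : P⦄, x ∈ I → z ∈ I → x ≤ y → y ≤ z → y ∈ I

/-- The value of the interval persistence module at a point. -/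
def intervalObj (I : Set P) (a : P) : Submodule R R :=
  if a ∈ I then (⊤ : Submodule R R) else ⊥

lemma intervalObj_eq_zero {I : Set P} {a : P} (h : a ∉ I) (x : intervalObj R I a) :
    x = 0 := by
  have hx := x.2
  simp only [intervalObj, if_neg h, Submodule.mem_bot] at hx
  exact Subtype.ext hx

/-- The structure map of the interval module between two degrees. -/
def intervalMapAux (I : Set P) (a b : P) :
    (intervalObj R I a) →ₗ[R] (intervalObj R I b) :=
  if h : a ∈ I ∧ b ∈ I then
    Submodule.inclusion (by simp [intervalObj, h.1, h.2])
  else 0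

lemma intervalMapAux_coe {I : Set P} {a b : P} (ha : a ∈ I) (hb : b ∈ I)
    (x : intervalObj R I a) : ((intervalMapAux R I a b x : R)) = (x : R) := by
  simp [intervalMapAux, ha, hb]

lemma intervalMapAux_of_not {I : Set P} {a b : P} (h : ¬(a ∈ I ∧ b ∈ I))
    (x : intervalObj R I a) : intervalMapAux R I a b x = 0 := by
  simp [intervalMapAux, h]

/-- The interval (indicator) persistence module of a convex set `I`,
as a functor from the preorder `P` to `R`-modules. -/
def intervalModule (I : Set P) (hI : IsConvexSet I) : P ⥤ ModuleCat R where
  obj a := ModuleCat.of R (intervalObj R I a)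
  map {a b} f := ModuleCat.ofHom (intervalMapAux R I a b)
  map_id a := by
    ext x : 2
    by_cases h : a ∈ I
    · exact Subtype.ext (intervalMapAux_coe R h h x)
    · rw [intervalObj_eq_zero R h x]
      simp
  map_comp {a b c} f g := by
    ext x : 2
    show intervalMapAux R I a c x = intervalMapAux R I b c (intervalMapAux R I a b x)
    by_cases ha : a ∈ I
    · by_cases hc : c ∈ I
      · have hb : b ∈ I := hI ha hc (leOfHom f) (leOfHom g)
        apply Subtype.ext
        rw [intervalMapAux_coe R ha hc, intervalMapAux_coe R hb hc,
          intervalMapAux_coe R ha hb]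
      · rw [intervalMapAux_of_not R (fun h => hc h.2),
          intervalMapAux_of_not R (fun h => hc h.2)]
    · rw [intervalObj_eq_zero R ha x]
      simp

end

lemma IsConvexSet.of_ordConnected {P : Type} [Preorder P] {s : Set P}
    (h : s.OrdConnected) : IsConvexSet s :=
  fun _ _ _ hx hz hxy hyz => h.out hx hz ⟨hxy, hyz⟩

open CategoryTheory Limits

noncomputable section
variable (k : Type) [Field k]

/-- The index poset `{(s,t) | s + t ≤ r}` for the graded tensor product. -/
abbrev SumLe (r : ℝ) : Type := {p : ℝ × ℝ // p.1 + p.2 ≤ r}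

lemma SumLe.le1 {r : ℝ} {p q : SumLe r} (h : p ≤ q) : p.1.1 ≤ q.1.1 := h.1
lemma SumLe.le2 {r : ℝ} {p q : SumLe r} (h : p ≤ q) : p.1.2 ≤ q.1.2 := h.2

/-- The diagram `(s,t) ↦ M_s ⊗ N_t` over `{(s,t) | s + t ≤ r}` whose colimit is the
degree-`r` piece of the graded tensor product `M ⊗_gr N`. -/
def grDiagram (M N : ℝ ⥤ ModuleCat k) (r : ℝ) : SumLe r ⥤ ModuleCat k where
  obj p := ModuleCat.of k (TensorProduct k (M.obj p.1.1) (N.obj p.1.2))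
  map {p q} f :=
    ModuleCat.ofHom (TensorProduct.map (M.map (homOfLE (SumLe.le1 (leOfHom f)))).hom
      (N.map (homOfLE (SumLe.le2 (leOfHom f)))).hom)
  map_id p := by
    dsimp
    rw [M.map_id, N.map_id]
    ext : 1
    simp [TensorProduct.map_id]
  map_comp {p q s} f g := by
    rw [show (homOfLE (SumLe.le1 (leOfHom (f ≫ g))) : p.1.1 ⟶ s.1.1) =
        homOfLE (SumLe.le1 (leOfHom f)) ≫ homOfLE (SumLe.le1 (leOfHom g)) from
        Subsingleton.elim _ _,
      show (homOfLE (SumLe.le2 (leOfHom (f ≫ g))) : p.1.2 ⟶ s.1.2) =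
        homOfLE (SumLe.le2 (leOfHom f)) ≫ homOfLE (SumLe.le2 (leOfHom g)) from
        Subsingleton.elim _ _,
      M.map_comp, N.map_comp]
    ext : 1
    simp [TensorProduct.map_comp]

/-- The structure-map cocone: the degree-`r` diagram mapping into the degree-`r'` colimit. -/
def grCocone (M N : ℝ ⥤ ModuleCat k) {r r' : ℝ} (h : r ≤ r') :
    Cocone (grDiagram k M N r) where
  pt := colimit (grDiagram k M N r')
  ι :=
    { app := fun j => colimit.ι (grDiagram k M N r') ⟨j.1, j.2.trans h⟩
      naturality := fun j j' f => by
        dsimp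
        refine Eq.trans ?_ (Category.comp_id _).symm
        exact colimit.w (grDiagram k M N r')
          (homOfLE (show (⟨j.1, j.2.trans h⟩ : SumLe r') ≤ ⟨j'.1, j'.2.trans h⟩ from
            leOfHom f)) }

/-- The graded-module tensor product of one-parameter persistence modules:
`(M ⊗_gr N)_r = colim_{s+t ≤ r} (M_s ⊗ N_t)`, with structure maps induced by
inclusions of index posets. -/
def grTensor (M N : ℝ ⥤ ModuleCat k) : ℝ ⥤ ModuleCat k where
  obj r := colimit (grDiagram k M N r)
  map {r r'} f := colimit.desc (grDiagram k M N r) (grCocone k M N (leOfHom f))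
  map_id r := by
    apply colimit.hom_ext
    intro j
    rw [colimit.ι_desc]
    exact (Category.comp_id _).symm
  map_comp {r r' r''} f g := by
    apply colimit.hom_ext
    intro j
    rw [colimit.ι_desc]
    erw [show colimit.ι (grDiagram k M N r) j ≫
        (colimit.desc (grDiagram k M N r) (grCocone k M N (leOfHom f)) ≫
          colimit.desc (grDiagram k M N r') (grCocone k M N (leOfHom g))) =
        (colimit.ι (grDiagram k M N r) j ≫
          colimit.desc (grDiagram k M N r) (grCocone k M N (leOfHom f))) ≫
          colimit.desc (grDiagram k M N r') (grCocone k M N (leOfHom g)) from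
      (Category.assoc _ _ _).symm, colimit.ι_desc]
    erw [show ((grCocone k M N (leOfHom f)).ι.app j : _ ⟶ _) =
        colimit.ι (grDiagram k M N r') ⟨j.1, j.2.trans (leOfHom f)⟩ from rfl,
      colimit.ι_desc]
    rfl

end

open CategoryTheory Limits

noncomputable section
variable (k : Type) [Field k]

/-- The map of degree-`r` tensor diagrams induced by a morphism in the left variable. -/
def grDiagramMapLeft {M M' : ℝ ⥤ ModuleCat k} (φ : M ⟶ M') (N : ℝ ⥤ ModuleCat k)
    (r : ℝ) : grDiagram k M N r ⟶ grDiagram k M' N r where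
  app p := ModuleCat.ofHom (TensorProduct.map (φ.app p.1.1).hom LinearMap.id)
  naturality {p q} f := by
    ext : 1
    apply TensorProduct.ext'
    intro x y
    have h1 := congr_arg (fun g => ModuleCat.Hom.hom g x) (φ.naturality (homOfLE (SumLe.le1 (leOfHom f))))
    simp only [ModuleCat.hom_comp, LinearMap.comp_apply] at h1
    show TensorProduct.map (φ.app q.1.1).hom LinearMap.id
        (TensorProduct.map (M.map (homOfLE (SumLe.le1 (leOfHom f)))).hom
          (N.map (homOfLE (SumLe.le2 (leOfHom f)))).hom (x ⊗ₜ[k] y)) =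
      TensorProduct.map (M'.map (homOfLE (SumLe.le1 (leOfHom f)))).hom
        (N.map (homOfLE (SumLe.le2 (leOfHom f)))).hom
        (TensorProduct.map (φ.app p.1.1).hom LinearMap.id (x ⊗ₜ[k] y))
    simp [TensorProduct.map_tmul, h1]

/-- The map of degree-`r` tensor diagrams induced by a morphism in the right variable. -/
def grDiagramMapRight (M : ℝ ⥤ ModuleCat k) {N N' : ℝ ⥤ ModuleCat k} (φ : N ⟶ N')
    (r : ℝ) : grDiagram k M N r ⟶ grDiagram k M N' r where
  app p := ModuleCat.ofHom (TensorProduct.map LinearMap.id (φ.app p.1.2).hom)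
  naturality {p q} f := by
    ext : 1
    apply TensorProduct.ext'
    intro x y
    have h1 := congr_arg (fun g => ModuleCat.Hom.hom g y) (φ.naturality (homOfLE (SumLe.le2 (leOfHom f))))
    simp only [ModuleCat.hom_comp, LinearMap.comp_apply] at h1
    show TensorProduct.map LinearMap.id (φ.app q.1.2).hom
        (TensorProduct.map (M.map (homOfLE (SumLe.le1 (leOfHom f)))).hom
          (N.map (homOfLE (SumLe.le2 (leOfHom f)))).hom (x ⊗ₜ[k] y)) =
      TensorProduct.map (M.map (homOfLE (SumLe.le1 (leOfHom f)))).hom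
        (N'.map (homOfLE (SumLe.le2 (leOfHom f)))).hom
        (TensorProduct.map LinearMap.id (φ.app p.1.2).hom (x ⊗ₜ[k] y))
    simp [TensorProduct.map_tmul, h1]

/-- Functoriality of the graded tensor product in the left variable. -/
def grTensorMapLeft {M M' : ℝ ⥤ ModuleCat k} (φ : M ⟶ M') (N : ℝ ⥤ ModuleCat k) :
    grTensor k M N ⟶ grTensor k M' N where
  app r := colimMap (grDiagramMapLeft k φ N r)
  naturality {r r'} f := by
    apply colimit.hom_ext
    intro j
    show colimit.ι (grDiagram k M N r) j ≫
        colimit.desc (grDiagram k M N r) (grCocone k M N (leOfHom f)) ≫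
        colimMap (grDiagramMapLeft k φ N r') =
      colimit.ι (grDiagram k M N r) j ≫
        colimMap (grDiagramMapLeft k φ N r) ≫
        colimit.desc (grDiagram k M' N r) (grCocone k M' N (leOfHom f))
    erw [← Category.assoc, colimit.ι_desc]
    erw [show ((grCocone k M N (leOfHom f)).ι.app j : _ ⟶ _) =
        colimit.ι (grDiagram k M N r') ⟨j.1, j.2.trans (leOfHom f)⟩ from rfl,
      ι_colimMap]
    erw [← Category.assoc, ι_colimMap, Category.assoc, colimit.ι_desc]
    rfl

/-- Functoriality of the graded tensor product in the right variable. -/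
def grTensorMapRight (M : ℝ ⥤ ModuleCat k) {N N' : ℝ ⥤ ModuleCat k} (φ : N ⟶ N') :
    grTensor k M N ⟶ grTensor k M N' where
  app r := colimMap (grDiagramMapRight k M φ r)
  naturality {r r'} f := by
    apply colimit.hom_ext
    intro j
    show colimit.ι (grDiagram k M N r) j ≫
        colimit.desc (grDiagram k M N r) (grCocone k M N (leOfHom f)) ≫
        colimMap (grDiagramMapRight k M φ r') =
      colimit.ι (grDiagram k M N r) j ≫
        colimMap (grDiagramMapRight k M φ r) ≫
        colimit.desc (grDiagram k M N' r) (grCocone k M N' (leOfHom f))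
    erw [← Category.assoc, colimit.ι_desc]
    erw [show ((grCocone k M N (leOfHom f)).ι.app j : _ ⟶ _) =
        colimit.ι (grDiagram k M N r') ⟨j.1, j.2.trans (leOfHom f)⟩ from rfl,
      ι_colimMap]
    erw [← Category.assoc, ι_colimMap, Category.assoc, colimit.ι_desc]
    rfl

end

/-!
Summing coefficients is an epimorphism `⊕_{b > a} k[b,∞) → k(a,∞)`, but it has no section:
every morphism `k(a,∞) → ⊕_{b > a} k[b,∞)` is zero. Hence `k(a,∞)` is not projective.

For flatness, the degree-`r` part `colim_{s + t ≤ r} A_s ⊗ k(a,∞)_t` of `A ⊗ k(a,∞)` is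
isomorphic, naturally in `A`, to the filtered colimit `colim_{s < r - a} A_s`
(via `x ↦ x ⊗ 1` and `x ⊗ n ↦ n • x`). Filtered colimits of modules are exact, so they
preserve monomorphisms.
-/

universe u

noncomputable section

open CategoryTheory Limits

variable (k : Type) [Field k] (a : ℝ)

abbrev ioiModule : ℝ ⥤ ModuleCat k :=
  intervalModule k (Set.Ioi a) (.of_ordConnected Set.ordConnected_Ioi)

lemma ioiModule_obj_eq_zero {t : ℝ} (ht : t ≤ a) (x : (ioiModule k a).obj t) : x = 0 :=
  intervalObj_eq_zero k (I := Set.Ioi a) (not_lt.mpr ht) x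

lemma ioiModule_map_val {s t : ℝ} (f : s ⟶ t) (hs : a < s) (x : (ioiModule k a).obj s) :
    ((ioiModule k a).map f x).1 = x.1 :=
  intervalMapAux_coe k (I := Set.Ioi a) hs (hs.trans_le (leOfHom f)) x

lemma mem_ioiModule_obj {t : ℝ} (ht : a < t) (c : k) : c ∈ intervalObj k (Set.Ioi a) t := by
  simp [intervalObj, Set.mem_Ioi.mpr ht]

lemma eq_zero_of_mem_supported_Ioc {r : ℝ} (hr : r ≤ a) {x : ℝ →₀ k}
    (hx : x ∈ Finsupp.supported k k (Set.Ioc a r)) : x = 0 := by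
  rwa [Set.Ioc_eq_empty (not_lt.mpr hr), Finsupp.supported_empty, Submodule.mem_bot] at hx

/-- `⊕_{b > a} k[b,∞)`: in degree `r`, the finitely supported families on `(a, r]`. -/
def freeSumIoi : ℝ ⥤ ModuleCat k where
  obj r := ModuleCat.of k (Finsupp.supported k k (Set.Ioc a r))
  map f := ModuleCat.ofHom (Submodule.inclusion
    (Finsupp.supported_mono (Set.Ioc_subset_Ioc_right (leOfHom f))))

def freeSumIoiSumApp (r : ℝ) :
    Finsupp.supported k k (Set.Ioc a r) →ₗ[k] intervalObj k (Set.Ioi a) r :=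
  LinearMap.codRestrict _ (Finsupp.lsum k (fun _ => LinearMap.id) ∘ₗ Submodule.subtype _)
    fun x => by
      rcases lt_or_ge a r with hr | hr
      · exact mem_ioiModule_obj k a hr _
      · simp [eq_zero_of_mem_supported_Ioc k a hr x.2]

def freeSumIoiSum : freeSumIoi k a ⟶ ioiModule k a where
  app r := ModuleCat.ofHom (freeSumIoiSumApp k a r)
  naturality {r r'} f := by
    ext x : 2
    rcases lt_or_ge a r with hr | hr
    · apply Subtype.ext
      exact (ioiModule_map_val k a f hr (freeSumIoiSumApp k a r x)).symm
    · have hx : x = 0 := Subtype.ext (eq_zero_of_mem_supported_Ioc k a hr x.2)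
      simp [hx]

instance epi_freeSumIoiSum : Epi (freeSumIoiSum k a) := by
  suffices ∀ r, Epi ((freeSumIoiSum k a).app r) from NatTrans.epi_of_epi_app _
  refine fun r => (ModuleCat.epi_iff_surjective _).mpr fun y => ?_
  rcases lt_or_ge a r with hr | hr
  · refine ⟨⟨Finsupp.single r y.1, Finsupp.single_mem_supported k _ ⟨hr, le_rfl⟩⟩, ?_⟩
    apply Subtype.ext
    change Finsupp.lsum k (fun _ => LinearMap.id) (Finsupp.single r y.1) = y.1
    rw [Finsupp.lsum_single, LinearMap.id_apply]
  · exact ⟨0, (ioiModule_obj_eq_zero k a hr y).symm ▸ map_zero _⟩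

/-- Every element of `k(a,∞)` in degree `r` comes from every degree in `(a, r]`, while an
element of `⊕_{b > a} k[b,∞)` in degree `s` has no component at `b > s`. -/
lemma hom_ioiModule_freeSumIoi_eq_zero (l : ioiModule k a ⟶ freeSumIoi k a) : l = 0 := by
  refine NatTrans.ext (funext fun r => ModuleCat.hom_ext (LinearMap.ext fun x =>
    Subtype.ext (Finsupp.ext fun t => ?_)))
  change (l.app r x).1 t = 0
  by_cases ht : t ∈ Set.Ioc a r
  · obtain ⟨hat, htr⟩ := ht
    have hs : a < (a + t) / 2 := by linarith
    let g : (a + t) / 2 ⟶ r := homOfLE (by linarith)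
    let y : (ioiModule k a).obj ((a + t) / 2) := ⟨x.1, mem_ioiModule_obj k a hs _⟩
    have hxy : (ioiModule k a).map g y = x := Subtype.ext (ioiModule_map_val k a g hs y)
    rw [← hxy, NatTrans.naturality_apply]
    exact (Finsupp.mem_supported' k _).mp (l.app _ y).2 t fun h => by linarith [h.2]
  · exact (Finsupp.mem_supported' k _).mp (l.app r x).2 t ht

lemma not_projective_ioiModule : ¬ Projective (ioiModule k a) := by
  intro _
  obtain ⟨l, hl⟩ := Projective.factors (𝟙 (ioiModule k a)) (freeSumIoiSum k a)
  rw [hom_ioiModule_freeSumIoi_eq_zero k a l, zero_comp] at hl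
  have h := congrArg Subtype.val (ConcreteCategory.congr_hom (NatTrans.congr_app hl (a + 1))
    ⟨1, mem_ioiModule_obj k a (lt_add_one a) 1⟩)
  exact zero_ne_one h

def inclIio (c : ℝ) : Set.Iio c ⥤ ℝ := (Subtype.mono_coe _).functor

def ioiGen {t : ℝ} (ht : a < t) : (ioiModule k a).obj t := ⟨1, mem_ioiModule_obj k a ht 1⟩

lemma eq_smul_ioiGen {t : ℝ} (ht : a < t) (n : (ioiModule k a).obj t) :
    n = n.1 • ioiGen k a ht :=
  Subtype.ext (mul_one n.1).symm

lemma ioiModule_map_ioiGen {s t : ℝ} (f : s ⟶ t) (hs : a < s) (ht : a < t) :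
    (ioiModule k a).map f (ioiGen k a hs) = ioiGen k a ht :=
  Subtype.ext (ioiModule_map_val k a f hs _)

def contractIoi (M : Type) [AddCommGroup M] [Module k M] (t : ℝ) :
    TensorProduct k M ((ioiModule k a).obj t) →ₗ[k] M :=
  TensorProduct.rid k M ∘ₗ LinearMap.lTensor M (intervalObj k (Set.Ioi a) t).subtype

lemma contractIoi_tmul (M : Type) [AddCommGroup M] [Module k M] {t : ℝ} (x : M)
    (n : (ioiModule k a).obj t) : contractIoi k a M t (x ⊗ₜ n) = n.1 • x :=
  TensorProduct.rid_tmul x n.1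

section Degree

variable {k a} (A : ℝ ⥤ ModuleCat k)

lemma grDiagram_ioiModule_obj_eq_zero {r : ℝ} (p : SumLe r) (hp : p.1.2 ≤ a)
    (x : (grDiagram k A (ioiModule k a) r).obj p) : x = 0 := by
  induction x using TensorProduct.induction_on with
  | zero => rfl
  | tmul x n => rw [ioiModule_obj_eq_zero k a hp n]; exact TensorProduct.tmul_zero _ _
  | add x y hx hy => rw [hx, hy]; exact add_zero _

lemma SumLe.fst_mem_Iio {r : ℝ} (p : SumLe r) (hp : a < p.1.2) : p.1.1 ∈ Set.Iio (r - a) :=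
  Set.mem_Iio.mpr (by linarith [p.2])

/-- Both sides are the image of `x ⊗ 1` placed at `(p.1, min p.2 q.2)`. -/
lemma colimit_ι_tmul_ioiGen {r : ℝ} {p q : SumLe r} (h : p.1.1 ≤ q.1.1) (hp : a < p.1.2)
    (hq : a < q.1.2) (x : A.obj p.1.1) :
    colimit.ι (grDiagram k A (ioiModule k a) r) q (A.map (homOfLE h) x ⊗ₜ ioiGen k a hq) =
      colimit.ι (grDiagram k A (ioiModule k a) r) p (x ⊗ₜ ioiGen k a hp) := by
  let m : SumLe r := ⟨(p.1.1, min p.1.2 q.1.2), by linarith [p.2, min_le_left p.1.2 q.1.2]⟩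
  have hm : a < m.1.2 := lt_min hp hq
  have slide : ∀ (u : SumLe r) (hmu : m ≤ u) (hu : a < u.1.2),
      colimit.ι (grDiagram k A (ioiModule k a) r) u (A.map (homOfLE hmu.1) x ⊗ₜ ioiGen k a hu) =
        colimit.ι (grDiagram k A (ioiModule k a) r) m (x ⊗ₜ ioiGen k a hm) := fun u hmu hu => by
    rw [← ioiModule_map_ioiGen k a (homOfLE hmu.2) hm hu]
    exact colimit.w_apply (grDiagram k A (ioiModule k a) r) (homOfLE hmu) (x ⊗ₜ ioiGen k a hm)
  have hp' := slide p ⟨le_rfl, min_le_left _ _⟩ hp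
  rw [show homOfLE (le_refl p.1.1) = 𝟙 p.1.1 from rfl, A.map_id] at hp'
  exact (slide q ⟨h, min_le_right _ _⟩ hq).trans hp'.symm

abbrev contractCocone (r : ℝ) : Cocone (grDiagram k A (ioiModule k a) r) where
  pt := colimit (inclIio (r - a) ⋙ A)
  ι :=
    { app := fun p => if hp : a < p.1.2 then
          ModuleCat.ofHom (contractIoi k a (A.obj p.1.1) p.1.2) ≫
            colimit.ι (inclIio (r - a) ⋙ A) ⟨p.1.1, p.fst_mem_Iio hp⟩
        else 0
      naturality := fun p q f => by
        dsimp only [Functor.const_obj_obj, Functor.const_obj_map]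
        rw [Category.comp_id]
        by_cases hp : a < p.1.2
        · have hq : a < q.1.2 := hp.trans_le (leOfHom f).2
          rw [dif_pos hp, dif_pos hq]
          refine ModuleCat.hom_ext (TensorProduct.ext' fun x n => ?_)
          change colimit.ι (inclIio (r - a) ⋙ A) ⟨q.1.1, _⟩ (contractIoi k a (A.obj q.1.1) q.1.2
              (A.map (homOfLE (leOfHom f).1) x ⊗ₜ (ioiModule k a).map (homOfLE (leOfHom f).2) n)) =
            colimit.ι (inclIio (r - a) ⋙ A) ⟨p.1.1, _⟩ (contractIoi k a (A.obj p.1.1) p.1.2 (x ⊗ₜ n))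
          rw [contractIoi_tmul, contractIoi_tmul, ioiModule_map_val k a _ hp]
          exact (LinearMap.map_smul _ _ _).trans ((congrArg (n.1 • ·) (colimit.w_apply
            (inclIio (r - a) ⋙ A) (homOfLE (leOfHom f).1 : (⟨p.1.1, _⟩ : Set.Iio (r - a)) ⟶ ⟨q.1.1, _⟩)
              x)).trans (LinearMap.map_smul _ _ _).symm)
        · rw [dif_neg hp]
          refine ModuleCat.hom_ext (LinearMap.ext fun x => ?_)
          rw [grDiagram_ioiModule_obj_eq_zero A p (not_lt.mp hp) x, map_zero, map_zero] }

def ioiIndex {r : ℝ} (s : Set.Iio (r - a)) : SumLe r :=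
  ⟨(s.1, (a + r - s.1) / 2), by linarith [Set.mem_Iio.mp s.2]⟩

lemma lt_ioiIndex_snd {r : ℝ} (s : Set.Iio (r - a)) : a < (ioiIndex (a := a) s).1.2 := by
  change a < (a + r - s.1) / 2
  linarith [Set.mem_Iio.mp s.2]

abbrev unitCocone (r : ℝ) : Cocone (inclIio (r - a) ⋙ A) where
  pt := colimit (grDiagram k A (ioiModule k a) r)
  ι :=
    { app := fun s =>
        ModuleCat.ofHom ((TensorProduct.mk k (A.obj s.1) _).flip (ioiGen k a (lt_ioiIndex_snd s))) ≫
          colimit.ι (grDiagram k A (ioiModule k a) r) (ioiIndex s)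
      naturality := fun s s' g => by
        dsimp only [Functor.const_obj_obj, Functor.const_obj_map]
        rw [Category.comp_id]
        exact ModuleCat.hom_ext (LinearMap.ext fun x =>
          colimit_ι_tmul_ioiGen A (leOfHom g) (lt_ioiIndex_snd s) (lt_ioiIndex_snd s') x) }

lemma contractCocone_ι_app_tmul {r : ℝ} (p : SumLe r) (hp : a < p.1.2) (x : A.obj p.1.1)
    (n : (ioiModule k a).obj p.1.2) :
    (contractCocone A r).ι.app p (x ⊗ₜ n) =
      colimit.ι (inclIio (r - a) ⋙ A) ⟨p.1.1, p.fst_mem_Iio hp⟩ (n.1 • x) := by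
  dsimp only [contractCocone]
  rw [dif_pos hp]
  exact congrArg _ (contractIoi_tmul k a _ x n)

def colimitGrDiagramIoiIso (r : ℝ) :
    colimit (inclIio (r - a) ⋙ A) ≅ colimit (grDiagram k A (ioiModule k a) r) where
  hom := colimit.desc _ (unitCocone A r)
  inv := colimit.desc _ (contractCocone A r)
  hom_inv_id := colimit.hom_ext fun s => by
    rw [colimit.ι_desc_assoc, Category.comp_id]
    refine ModuleCat.hom_ext (LinearMap.ext fun x => ?_)
    exact (colimit.ι_desc_apply (contractCocone A r) (ioiIndex s) _).trans
      ((contractCocone_ι_app_tmul A _ (lt_ioiIndex_snd s) x _).trans (congrArg _ (one_smul k x)))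
  inv_hom_id := colimit.hom_ext fun p => by
    rw [colimit.ι_desc_assoc, Category.comp_id]
    by_cases hp : a < p.1.2
    · refine ModuleCat.hom_ext (TensorProduct.ext' fun x n => ?_)
      let s : Set.Iio (r - a) := ⟨p.1.1, p.fst_mem_Iio hp⟩
      let D := grDiagram k A (ioiModule k a) r
      have hx := colimit_ι_tmul_ioiGen A (q := ioiIndex s) (le_refl p.1.1) hp (lt_ioiIndex_snd s) x
      have hid : A.map (homOfLE (le_refl p.1.1) : p.1.1 ⟶ (ioiIndex s).1.1) x = x :=
        ConcreteCategory.congr_hom (A.map_id p.1.1) x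
      rw [hid] at hx
      calc colimit.desc _ (unitCocone A r) ((contractCocone A r).ι.app p (x ⊗ₜ n))
          = colimit.ι D (ioiIndex s) ((n.1 • x) ⊗ₜ ioiGen k a (lt_ioiIndex_snd s)) :=
            (congrArg _ (contractCocone_ι_app_tmul A p hp x n)).trans
              (colimit.ι_desc_apply (unitCocone A r) s _)
        _ = n.1 • colimit.ι D p (x ⊗ₜ ioiGen k a hp) :=
            (congrArg _ (((TensorProduct.mk k _ _).flip _).map_smul n.1 x)).trans
              ((LinearMap.map_smul _ _ _).trans (congrArg _ hx))
        _ = colimit.ι D p (x ⊗ₜ (n.1 • ioiGen k a hp)) :=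
            (LinearMap.map_smul _ _ _).symm.trans
              (congrArg _ ((TensorProduct.mk k _ _ x).map_smul n.1 _).symm)
        _ = colimit.ι D p (x ⊗ₜ n) := by rw [← eq_smul_ioiGen k a hp n]
    · refine ModuleCat.hom_ext (LinearMap.ext fun x => ?_)
      rw [grDiagram_ioiModule_obj_eq_zero A p (not_lt.mp hp) x, map_zero, map_zero]

end Degree

lemma colimitGrDiagramIoiIso_hom_naturality {A B : ℝ ⥤ ModuleCat k} (f : A ⟶ B) (r : ℝ) :
    colimMap (Functor.whiskerLeft (inclIio (r - a)) f) ≫ (colimitGrDiagramIoiIso B r).hom =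
      (colimitGrDiagramIoiIso A r).hom ≫ colimMap (grDiagramMapLeft k f (ioiModule k a) r) := by
  refine colimit.hom_ext fun s => ?_
  dsimp only [colimitGrDiagramIoiIso]
  rw [ι_colimMap_assoc, colimit.ι_desc, colimit.ι_desc_assoc]
  exact ModuleCat.hom_ext (LinearMap.ext fun x => (ConcreteCategory.congr_hom
    (ι_colimMap (grDiagramMapLeft k f (ioiModule k a) r) (ioiIndex s))
      (x ⊗ₜ ioiGen k a (lt_ioiIndex_snd s))).symm)

lemma mono_colimMap_whiskerLeft_of_isFiltered {R : Type u} [Ring R] {J : Type u}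
    [SmallCategory J] [IsFiltered J] {C : Type*} [Category C] (F : J ⥤ C)
    {A B : C ⥤ ModuleCat.{u} R} (f : A ⟶ B) [Mono f] : Mono (colimMap (Functor.whiskerLeft F f)) :=
  have (j : J) : Mono ((Functor.whiskerLeft F f).app j) := inferInstanceAs (Mono (f.app _))
  have := NatTrans.mono_of_mono_app (Functor.whiskerLeft F f)
  inferInstanceAs (Mono (colim.map _))

instance mono_grTensorMapLeft_ioiModule {A B : ℝ ⥤ ModuleCat k} (f : A ⟶ B) [Mono f] :
    Mono (grTensorMapLeft k f (ioiModule k a)) := by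
  have (r : ℝ) : Mono ((grTensorMapLeft k f (ioiModule k a)).app r) := by
    have := mono_colimMap_whiskerLeft_of_isFiltered (inclIio (r - a)) f
    change Mono (colimMap _)
    rw [← (Iso.inv_comp_eq _).mpr (colimitGrDiagramIoiIso_hom_naturality k a f r)]
    infer_instance
  exact NatTrans.mono_of_mono_app _

end

open CategoryTheory Limits in
/-- The interval module `k(a,∞)` is not a projective object in the category of
one-parameter persistence modules, although it is flat: tensoring with it (in the
graded-module sense) preserves monomorphisms. -/
theorem Ioi_not_projective_but_flat (k : Type) [Field k] (a : ℝ) :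
    ¬ Projective (intervalModule k (Set.Ioi a) (.of_ordConnected Set.ordConnected_Ioi)) ∧
    ∀ {A B : ℝ ⥤ ModuleCat k} (f : A ⟶ B), Mono f →
      Mono (grTensorMapLeft k f
        (intervalModule k (Set.Ioi a) (.of_ordConnected Set.ordConnected_Ioi))) :=
  ⟨not_projective_ioiModule k a, fun f _ => mono_grTensorMapLeft_ioiModule k a f⟩
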